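/- Let Φ be an N-function that is C² on (0,∞), satisfies the Δ₂-condition with constant D, and is uniformly convex with constants 0 < c ≤ C. Define Ψ : [0,∞) → [0,∞) by Ψ(0) = 0 and Ψ'(t) = √(t Φ'(t)). Then Ψ is an N-function satisfying the Δ₂-condition with a constant depending only on D, Ψ is C² on (0,∞), and there exist constants 0 < c' ≤ C', depending only on c and C, such that c' √(Φ''(t)) ≤ Ψ''(t) ≤ C' √(Φ''(t)) for all t > 0. -/

import Mathlib

/-!
`Ψ' = √(t Φ')` is nondecreasing, vanishes at `0` and is positive on `(0, ∞)` because `t Φ'(t)` is,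
so `Ψ` is an N-function. Monotonicity of `Φ'` gives `Φ(t) ≤ t Φ'(t) ≤ Φ(2t)`, hence by `Δ₂` twice
`2t Φ'(2t) ≤ Φ(4t) ≤ D² Φ(t) ≤ D² t Φ'(t)`, i.e. `Ψ'(2t) ≤ D Ψ'(t)`; substituting `s = 2u` in
`Ψ(2t) = ∫₀^{2t} Ψ'` then gives `Ψ(2t) ≤ 2D Ψ(t)`. Finally `Ψ'' = (Φ' + t Φ'')/(2√(t Φ'))`, and
`c Φ' ≤ t Φ'' ≤ C Φ'` makes both `Φ' + t Φ'' ≍ Φ'` and `Φ'/t ≍ Φ''`; comparing squares,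
`(1+c)/(2√C) · √Φ'' ≤ Ψ'' ≤ (1+C)/(2√c) · √Φ''`.
-/

open MeasureTheory

/-- An N-function `Φ` with derivative `Φ'`: differentiable on `[0,∞)` with
`Φ(0) = 0`, `Φ(t) = ∫₀ᵗ Φ'(s) ds`, `Φ'` nondecreasing, right-continuous,
`Φ'(0) = 0` and `Φ'(t) > 0` for `t > 0`. -/
structure IsNFunction (Φ Φ' : ℝ → ℝ) : Prop where
  map_zero : Φ 0 = 0
  eq_integral : ∀ t : ℝ, 0 ≤ t → Φ t = ∫ s in (0:ℝ)..t, Φ' s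
  deriv_zero : Φ' 0 = 0
  deriv_pos : ∀ t : ℝ, 0 < t → 0 < Φ' t
  deriv_mono : MonotoneOn Φ' (Set.Ici 0)
  deriv_rightCont : ∀ t : ℝ, 0 ≤ t → ContinuousWithinAt Φ' (Set.Ici t) t

/-- The Δ₂-condition with constant `D`. -/
def Delta2 (Φ : ℝ → ℝ) (D : ℝ) : Prop := ∀ t : ℝ, 0 < t → Φ (2 * t) ≤ D * Φ t

/-- Uniform convexity with constants `c ≤ C`: `c Φ'(t) ≤ t Φ''(t) ≤ C Φ'(t)` for `t > 0`. -/
def UniformlyConvex (Φ' Φ'' : ℝ → ℝ) (c C : ℝ) : Prop :=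
  ∀ t : ℝ, 0 < t → c * Φ' t ≤ t * Φ'' t ∧ t * Φ'' t ≤ C * Φ' t

/-- `ψ'(t) = √(t Φ'(t))`. -/
noncomputable def psiDeriv (Φ' : ℝ → ℝ) (t : ℝ) : ℝ := Real.sqrt (t * Φ' t)

/-- `ψ(t) = ∫₀ᵗ √(s Φ'(s)) ds`. -/
noncomputable def psiOf (Φ' : ℝ → ℝ) (t : ℝ) : ℝ := ∫ s in (0:ℝ)..t, psiDeriv Φ' s

/-- `V(s) = ψ'(|s|) s/|s|` for `s ≠ 0`, `V(0) = 0`. -/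
noncomputable def Vof (Φ' : ℝ → ℝ) (s : ℝ) : ℝ :=
  if s = 0 then 0 else psiDeriv Φ' |s| * s / |s|

noncomputable def psiDeriv2 (Φ' Φ'' : ℝ → ℝ) (t : ℝ) : ℝ :=
  (Φ' t + t * Φ'' t) / (2 * psiDeriv Φ' t)

namespace IsNFunction

variable {Φ Φ' : ℝ → ℝ}

theorem deriv_nonneg (hN : IsNFunction Φ Φ') {t : ℝ} (ht : 0 ≤ t) : 0 ≤ Φ' t := by
  simpa [hN.deriv_zero] using hN.deriv_mono Set.self_mem_Ici ht ht

theorem intervalIntegrable_deriv (hN : IsNFunction Φ Φ') {a b : ℝ} (ha : 0 ≤ a) (hb : 0 ≤ b) :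
    IntervalIntegrable Φ' volume a b :=
  (hN.deriv_mono.mono fun _ hx => le_trans (le_min ha hb) hx.1).intervalIntegrable

theorem mul_deriv_le_integral (hN : IsNFunction Φ Φ') {a b : ℝ} (ha : 0 ≤ a) (hab : a ≤ b) :
    (b - a) * Φ' a ≤ ∫ s in a..b, Φ' s := by
  have h := intervalIntegral.integral_mono_on hab intervalIntegrable_const
    (hN.intervalIntegrable_deriv ha (ha.trans hab))
    fun s hs => hN.deriv_mono (Set.mem_Ici.mpr ha) (Set.mem_Ici.mpr (ha.trans hs.1)) hs.1
  rwa [intervalIntegral.integral_const, smul_eq_mul] at h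

theorem integral_le_mul_deriv (hN : IsNFunction Φ Φ') {a b : ℝ} (ha : 0 ≤ a) (hab : a ≤ b) :
    ∫ s in a..b, Φ' s ≤ (b - a) * Φ' b := by
  have h := intervalIntegral.integral_mono_on hab
    (hN.intervalIntegrable_deriv ha (ha.trans hab)) intervalIntegrable_const
    fun s hs => hN.deriv_mono (Set.mem_Ici.mpr (ha.trans hs.1)) (Set.mem_Ici.mpr (ha.trans hab))
      hs.2
  rwa [intervalIntegral.integral_const, smul_eq_mul] at h

theorem nonneg (hN : IsNFunction Φ Φ') {t : ℝ} (ht : 0 ≤ t) : 0 ≤ Φ t := by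
  simpa [hN.eq_integral t ht, hN.deriv_zero] using hN.mul_deriv_le_integral le_rfl ht

theorem le_mul_deriv (hN : IsNFunction Φ Φ') {t : ℝ} (ht : 0 ≤ t) : Φ t ≤ t * Φ' t := by
  simpa [hN.eq_integral t ht] using hN.integral_le_mul_deriv le_rfl ht

theorem mul_deriv_le_two_mul (hN : IsNFunction Φ Φ') {t : ℝ} (ht : 0 ≤ t) :
    t * Φ' t ≤ Φ (2 * t) := by
  have h2t : 0 ≤ 2 * t := by linarith
  have hsplit : Φ (2 * t) - Φ t = ∫ s in t..2 * t, Φ' s := by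
    rw [hN.eq_integral _ h2t, hN.eq_integral t ht]
    exact intervalIntegral.integral_interval_sub_left
      (hN.intervalIntegrable_deriv le_rfl h2t) (hN.intervalIntegrable_deriv le_rfl ht)
  have hlow := hN.mul_deriv_le_integral ht (by linarith : t ≤ 2 * t)
  have := hN.nonneg ht
  nlinarith

theorem two_mul_deriv_two_mul_le (hN : IsNFunction Φ Φ') {D : ℝ} (hD : 0 ≤ D)
    (hΔ : Delta2 Φ D) {t : ℝ} (ht : 0 ≤ t) :
    (2 * t) * Φ' (2 * t) ≤ D ^ 2 * (t * Φ' t) := by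
  rcases ht.eq_or_lt with rfl | ht
  · simp [hN.deriv_zero]
  calc (2 * t) * Φ' (2 * t) ≤ Φ (2 * (2 * t)) := hN.mul_deriv_le_two_mul (by linarith)
    _ ≤ D * Φ (2 * t) := hΔ _ (by linarith)
    _ ≤ D * (D * Φ t) := mul_le_mul_of_nonneg_left (hΔ t ht) hD
    _ ≤ D ^ 2 * (t * Φ' t) := by nlinarith [hN.le_mul_deriv ht.le, mul_nonneg hD hD]

theorem delta2_of_deriv_two_mul_le (hN : IsNFunction Φ Φ') {K : ℝ}
    (hK : ∀ t, 0 ≤ t → Φ' (2 * t) ≤ K * Φ' t) : Delta2 Φ (2 * K) := by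
  intro t ht
  have hscale : Φ (2 * t) = 2 * ∫ u in (0:ℝ)..t, Φ' (2 * u) := by
    rw [intervalIntegral.integral_comp_mul_left Φ' two_ne_zero, hN.eq_integral _ (by linarith)]
    simp
  have hint : IntervalIntegrable (fun u => Φ' (2 * u)) volume 0 t := by
    refine MonotoneOn.intervalIntegrable fun x hx y hy hxy => hN.deriv_mono ?_ ?_ (by linarith)
    · simp only [Set.uIcc_of_le ht.le, Set.mem_Icc] at hx; simp only [Set.mem_Ici]; linarith
    · simp only [Set.uIcc_of_le ht.le, Set.mem_Icc] at hy; simp only [Set.mem_Ici]; linarith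
  have hle := intervalIntegral.integral_mono_on ht.le hint
    ((hN.intervalIntegrable_deriv le_rfl ht.le).const_mul K) fun u hu => hK u hu.1
  rw [intervalIntegral.integral_const_mul, ← hN.eq_integral t ht.le] at hle
  linarith

end IsNFunction

section Psi

variable {Φ Φ' : ℝ → ℝ}

theorem isNFunction_psiOf (hN : IsNFunction Φ Φ') : IsNFunction (psiOf Φ') (psiDeriv Φ') where
  map_zero := by simp [psiOf]
  eq_integral _ _ := rfl
  deriv_zero := by simp [psiDeriv]
  deriv_pos t ht := Real.sqrt_pos.mpr (mul_pos ht (hN.deriv_pos t ht))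
  deriv_mono x hx y hy hxy :=
    Real.sqrt_le_sqrt (mul_le_mul hxy (hN.deriv_mono hx hy hxy) (hN.deriv_nonneg hx) (hx.trans hxy))
  deriv_rightCont t ht := Real.continuous_sqrt.continuousAt.comp_continuousWithinAt
    (continuousWithinAt_id.mul (hN.deriv_rightCont t ht))

theorem psiDeriv_two_mul_le (hN : IsNFunction Φ Φ') {D : ℝ} (hD : 0 ≤ D) (hΔ : Delta2 Φ D)
    {t : ℝ} (ht : 0 ≤ t) : psiDeriv Φ' (2 * t) ≤ D * psiDeriv Φ' t := by
  calc psiDeriv Φ' (2 * t) ≤ Real.sqrt (D ^ 2 * (t * Φ' t)) :=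
        Real.sqrt_le_sqrt (hN.two_mul_deriv_two_mul_le hD hΔ ht)
    _ = D * psiDeriv Φ' t := by rw [Real.sqrt_mul (sq_nonneg D), Real.sqrt_sq hD, psiDeriv]

theorem delta2_psiOf (hN : IsNFunction Φ Φ') {D : ℝ} (hD : 0 ≤ D) (hΔ : Delta2 Φ D) :
    Delta2 (psiOf Φ') (2 * D) :=
  (isNFunction_psiOf hN).delta2_of_deriv_two_mul_le fun _ ht => psiDeriv_two_mul_le hN hD hΔ ht

theorem hasDerivAt_psiDeriv {Φ'' : ℝ → ℝ} {t : ℝ} (ht : 0 < t) (hpos : 0 < Φ' t)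
    (hd : HasDerivAt Φ' (Φ'' t) t) : HasDerivAt (psiDeriv Φ') (psiDeriv2 Φ' Φ'' t) t := by
  have h := ((hasDerivAt_id' t).mul hd).sqrt (mul_pos ht hpos).ne'
  rw [one_mul] at h
  exact h

theorem hasDerivAt_psiOf (hN : IsNFunction Φ Φ') (hcont : ∀ t, 0 < t → ContinuousAt Φ' t)
    {t : ℝ} (ht : 0 < t) : HasDerivAt (psiOf Φ') (psiDeriv Φ' t) t := by
  have hcont' : ∀ s, 0 < s → ContinuousAt (psiDeriv Φ') s := fun s hs =>
    Real.continuous_sqrt.continuousAt.comp (continuousAt_id.mul (hcont s hs))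
  exact intervalIntegral.integral_hasDerivAt_right
    ((isNFunction_psiOf hN).intervalIntegrable_deriv le_rfl ht.le)
    (ContinuousOn.stronglyMeasurableAtFilter isOpen_Ioi
      (fun s hs => (hcont' s hs).continuousWithinAt) t ht)
    (hcont' t ht)

theorem contDiffOn_psiOf (hN : IsNFunction Φ Φ') (hΦ : ContDiffOn ℝ 2 Φ (Set.Ioi 0))
    (hd : ∀ t, 0 < t → HasDerivAt Φ (Φ' t) t) : ContDiffOn ℝ 2 (psiOf Φ') (Set.Ioi 0) := by
  have hΦ' : ContDiffOn ℝ 1 Φ' (Set.Ioi 0) :=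
    (hΦ.deriv_of_isOpen isOpen_Ioi (by norm_num)).congr fun t ht => (hd t ht).deriv.symm
  have hpsi' : ContDiffOn ℝ 1 (psiDeriv Φ') (Set.Ioi 0) :=
    (contDiffOn_id.mul hΦ').sqrt fun t ht => (mul_pos ht (hN.deriv_pos t ht)).ne'
  have hderiv : ∀ t, 0 < t → HasDerivAt (psiOf Φ') (psiDeriv Φ' t) t := fun t ht =>
    hasDerivAt_psiOf hN (fun s hs => hΦ'.continuousOn.continuousAt (isOpen_Ioi.mem_nhds hs)) ht
  refine (contDiffOn_succ_iff_deriv_of_isOpen (n := 1) isOpen_Ioi).mpr ⟨?_, by simp, ?_⟩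
  · exact fun t ht => (hderiv t ht).differentiableAt.differentiableWithinAt
  · exact hpsi'.congr fun t ht => (hderiv t ht).deriv

theorem sq_psiDeriv2 {Φ'' : ℝ → ℝ} {t : ℝ} (ht : 0 < t) (hpos : 0 < Φ' t) :
    psiDeriv2 Φ' Φ'' t ^ 2 = (Φ' t + t * Φ'' t) ^ 2 / (4 * (t * Φ' t)) := by
  rw [psiDeriv2, psiDeriv, div_pow, mul_pow, Real.sq_sqrt (mul_pos ht hpos).le]
  ring

end Psi

namespace UniformlyConvex

variable {Φ' Φ'' : ℝ → ℝ} {c C : ℝ}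

theorem mul_sqrt_le_psiDeriv2 (h : UniformlyConvex Φ' Φ'' c C) (hc : 0 < c) {t : ℝ} (ht : 0 < t)
    (hpos : 0 < Φ' t) : (1 + c) / (2 * √C) * √(Φ'' t) ≤ psiDeriv2 Φ' Φ'' t := by
  obtain ⟨hlo, hhi⟩ := h t ht
  have htb : 0 < t * Φ'' t := lt_of_lt_of_le (mul_pos hc hpos) hlo
  have hb : 0 < Φ'' t := pos_of_mul_pos_right htb ht.le
  have hC : 0 < C := pos_of_mul_pos_left (htb.trans_le hhi) hpos.le
  have hΨ : 0 ≤ psiDeriv2 Φ' Φ'' t := div_nonneg (by linarith) (by unfold psiDeriv; positivity)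
  rw [← pow_le_pow_iff_left₀ (by positivity) hΨ two_ne_zero, sq_psiDeriv2 ht hpos, mul_pow,
    div_pow, mul_pow, Real.sq_sqrt hC.le, Real.sq_sqrt hb.le, div_mul_eq_mul_div,
    div_le_div_iff₀ (by positivity) (by positivity)]
  have hsq : ((1 + c) * Φ' t) ^ 2 ≤ (Φ' t + t * Φ'' t) ^ 2 :=
    pow_le_pow_left₀ (by positivity) (by linarith) 2
  nlinarith [mul_le_mul_of_nonneg_left hhi (by positivity : 0 ≤ (1 + c) ^ 2 * Φ' t),
    mul_le_mul_of_nonneg_left hsq hC.le]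

theorem psiDeriv2_le_mul_sqrt (h : UniformlyConvex Φ' Φ'' c C) (hc : 0 < c) {t : ℝ} (ht : 0 < t)
    (hpos : 0 < Φ' t) : psiDeriv2 Φ' Φ'' t ≤ (1 + C) / (2 * √c) * √(Φ'' t) := by
  obtain ⟨hlo, hhi⟩ := h t ht
  have htb : 0 < t * Φ'' t := lt_of_lt_of_le (mul_pos hc hpos) hlo
  have hb : 0 < Φ'' t := pos_of_mul_pos_right htb ht.le
  have hC : 0 < C := pos_of_mul_pos_left (htb.trans_le hhi) hpos.le
  have hΨ : 0 ≤ psiDeriv2 Φ' Φ'' t := div_nonneg (by linarith) (by unfold psiDeriv; positivity)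
  rw [← pow_le_pow_iff_left₀ hΨ (by positivity) two_ne_zero, sq_psiDeriv2 ht hpos, mul_pow,
    div_pow, mul_pow, Real.sq_sqrt hc.le, Real.sq_sqrt hb.le, div_mul_eq_mul_div,
    div_le_div_iff₀ (by positivity) (by positivity)]
  have hsq : (Φ' t + t * Φ'' t) ^ 2 ≤ ((1 + C) * Φ' t) ^ 2 :=
    pow_le_pow_left₀ (by positivity) (by linarith) 2
  nlinarith [mul_le_mul_of_nonneg_left hlo (by positivity : 0 ≤ (1 + C) ^ 2 * Φ' t),
    mul_le_mul_of_nonneg_left hsq hc.le]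

end UniformlyConvex

/-- with `Ψ(0) = 0`, `Ψ'(t) = √(t Φ'(t))`, the function `Ψ` is an
N-function in `Δ₂` (constant depending only on `D`), is `C²` on `(0,∞)`, and
`Ψ''(t) ≂ √(Φ''(t))` with constants depending only on `c, C`. -/
theorem statement5 :
    ∀ D : ℝ, 0 < D → ∃ D' : ℝ, 0 < D' ∧
    ∀ c C : ℝ, 0 < c → c ≤ C → ∃ c' C' : ℝ, 0 < c' ∧ c' ≤ C' ∧
      ∀ (Φ Φ' Φ'' : ℝ → ℝ),
        IsNFunction Φ Φ' →
        ContDiffOn ℝ 2 Φ (Set.Ioi 0) →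
        (∀ t : ℝ, 0 < t → HasDerivAt Φ (Φ' t) t) →
        (∀ t : ℝ, 0 < t → HasDerivAt Φ' (Φ'' t) t) →
        Delta2 Φ D →
        UniformlyConvex Φ' Φ'' c C →
        IsNFunction (psiOf Φ') (psiDeriv Φ') ∧
        Delta2 (psiOf Φ') D' ∧
        ContDiffOn ℝ 2 (psiOf Φ') (Set.Ioi 0) ∧
        ∃ Ψ'' : ℝ → ℝ,
          (∀ t : ℝ, 0 < t → HasDerivAt (psiDeriv Φ') (Ψ'' t) t) ∧
          ∀ t : ℝ, 0 < t →
            c' * Real.sqrt (Φ'' t) ≤ Ψ'' t ∧ Ψ'' t ≤ C' * Real.sqrt (Φ'' t) := by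
  intro D hD
  refine ⟨2 * D, by positivity, fun c C hc hcC => ?_⟩
  have hC : 0 < C := hc.trans_le hcC
  refine ⟨(1 + c) / (2 * √C), (1 + C) / (2 * √c), by positivity, by gcongr, ?_⟩
  intro Φ Φ' Φ'' hN hΦ hΦd hΦ'd hΔ hUC
  refine ⟨isNFunction_psiOf hN, delta2_psiOf hN hD.le hΔ, contDiffOn_psiOf hN hΦ hΦd,
    psiDeriv2 Φ' Φ'', fun t ht => hasDerivAt_psiDeriv ht (hN.deriv_pos t ht) (hΦ'd t ht),
    fun t ht => ⟨?_, ?_⟩⟩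
  · exact hUC.mul_sqrt_le_psiDeriv2 hc ht (hN.deriv_pos t ht)
  · exact hUC.psiDeriv2_le_mul_sqrt hc ht (hN.deriv_pos t ht)
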